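/- (Jones splitting) Let B be a collection of dyadic intervals with finite Carleson constant ⟦B⟧, and let A be the largest integer less than 4⟦B⟧. Then B can be decomposed into pairwise disjoint subcollections B_1, ..., B_A such that ⟦B_i⟧ ≤ 4 for each i ≤ A. -/

import Mathlib

/-!
Index the intervals of `B` by their generation, the number of intervals of `B` strictly
containing them, and split `B` by generation modulo `A`; note `⟦B⟧ ≤ A`, as `4⟦B⟧ ≤ A + 1` and
`⟦B⟧ ≥ 1`. Below an interval `t` of `B`, the layers of generation `gen t + m` are disjoint
families, each covered by the previous one, so their total lengths decrease in `m`. Hence the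
layers at depths `A, 2A, 3A, …` carry at most a `1/A` share of the mass `∑_{I ⊆ t} |I| ≤ A|t|`,
and the class of `t` has mass at most `2|t|` below `t`. Testing the Carleson condition on the
maximal intervals of a class inside `J` then gives `⟦B_i⟧ ≤ 2`.
-/

open MeasureTheory

/-- A dyadic interval `[k/2^n, (k+1)/2^n)` of `[0,1)`. -/
structure DI where
  n : ℕ
  k : ℕ
  hk : k < 2 ^ n

namespace DI

/-- The underlying set of a dyadic interval. -/
def carrier (I : DI) : Set ℝ := Set.Ico ((I.k : ℝ) / 2 ^ I.n) ((I.k + 1 : ℝ) / 2 ^ I.n)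

/-- The length `|I| = 2^{-n}` of a dyadic interval. -/
noncomputable def len (I : DI) : ENNReal := ENNReal.ofReal ((2 : ℝ)⁻¹ ^ I.n)

end DI

/-- The Carleson sum `∑_{I ∈ L, I ⊆ J} |I|`. -/
noncomputable def carlesonSum (L : Set DI) (J : DI) : ENNReal :=
  ∑' I : {I : DI // I ∈ L ∧ I.carrier ⊆ J.carrier}, I.1.len

/-- `L` satisfies the `M`-Carleson condition. -/
def CarlesonLE (L : Set DI) (M : ENNReal) : Prop :=
  ∀ J : DI, carlesonSum L J ≤ M * J.len

/-- The Carleson constant `⟦L⟧ = sup_J (1/|J|) ∑_{I ∈ L, I ⊆ J} |I|`. -/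
noncomputable def carlesonConst (L : Set DI) : ENNReal :=
  ⨆ J : DI, carlesonSum L J / J.len

/-- The square of the dyadic BMO norm of `x = ∑ x_I h_I`,
`‖x‖² = sup_J (1/|J|) ∑_{I ⊆ J} x_I² |I|`, in terms of the Haar coefficients. -/
noncomputable def bmoSq (x : DI → ℝ) : ENNReal :=
  ⨆ J : DI, (∑' I : {I : DI // I.carrier ⊆ J.carrier},
      ENNReal.ofReal ((x I.1) ^ 2) * I.1.len) / J.len

/-- `|L*|`: the Lebesgue measure of the set covered by the collection `L`. -/
noncomputable def covMeas (L : Set DI) : ENNReal := volume (⋃ I ∈ L, I.carrier)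

/-- `y` is the coefficient function of `Tx` where `T h_I = h_{τ(I)}` and `x` has
coefficients `x_I`. -/
def HaarCompat (τ : DI → DI) (x y : DI → ℝ) : Prop :=
  (∀ I, y (τ I) = x I) ∧ ∀ J, J ∉ Set.range τ → y J = 0

/-- The maximal elements of a collection of dyadic intervals, under inclusion. -/
def maxSet (S : Set DI) : Set DI :=
  {I | I ∈ S ∧ ∀ K ∈ S, I.carrier ⊆ K.carrier → I = K}


open scoped ENNReal

namespace DI

lemma ext {I J : DI} (hn : I.n = J.n) (hk : I.k = J.k) : I = J := by
  cases I; cases J; simp_all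

lemma injective_n_k : Function.Injective fun I : DI => (I.n, I.k) := fun _ _ h =>
  ext (Prod.ext_iff.1 h).1 (Prod.ext_iff.1 h).2

instance : Countable DI := injective_n_k.countable

lemma mem_carrier_iff {I : DI} {x : ℝ} : x ∈ I.carrier ↔ 0 ≤ x ∧ ⌊x * 2 ^ I.n⌋₊ = I.k := by
  have h2n : (0 : ℝ) < 2 ^ I.n := by positivity
  rw [carrier, Set.mem_Ico, div_le_iff₀ h2n, lt_div_iff₀ h2n]
  constructor
  · rintro ⟨hk, hk1⟩
    have hx : 0 ≤ x * 2 ^ I.n := (Nat.cast_nonneg _).trans hk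
    exact ⟨nonneg_of_mul_nonneg_left hx h2n, (Nat.floor_eq_iff hx).2 ⟨hk, hk1⟩⟩
  · rintro ⟨hx, hfloor⟩
    exact (Nat.floor_eq_iff (by positivity)).1 hfloor

lemma floor_mul_two_pow_of_le (x : ℝ) {m n : ℕ} (h : m ≤ n) :
    ⌊x * 2 ^ m⌋₊ = ⌊x * 2 ^ n⌋₊ / 2 ^ (n - m) := by
  rw [← Nat.floor_div_natCast, Nat.cast_pow, Nat.cast_ofNat, ← Nat.add_sub_cancel' h, pow_add,
    Nat.add_sub_cancel_left, ← mul_assoc, mul_div_cancel_right₀ _ (by positivity)]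

lemma carrier_subset_of_le_of_not_disjoint {I J : DI} (hn : J.n ≤ I.n)
    (h : ¬ Disjoint I.carrier J.carrier) : I.carrier ⊆ J.carrier := by
  obtain ⟨x, hxI, hxJ⟩ := Set.not_disjoint_iff.1 h
  rw [mem_carrier_iff] at hxI hxJ
  intro y hy
  rw [mem_carrier_iff] at hy ⊢
  refine ⟨hy.1, ?_⟩
  rw [floor_mul_two_pow_of_le y hn, hy.2, ← hxI.2, ← floor_mul_two_pow_of_le x hn, hxJ.2]

lemma carrier_subset_or_subset_of_not_disjoint {I J : DI} (h : ¬ Disjoint I.carrier J.carrier) :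
    I.carrier ⊆ J.carrier ∨ J.carrier ⊆ I.carrier :=
  (le_total J.n I.n).imp (carrier_subset_of_le_of_not_disjoint · h)
    (carrier_subset_of_le_of_not_disjoint · (disjoint_comm.not.1 h))

lemma len_eq_volume (I : DI) : I.len = volume I.carrier := by
  rw [carrier, Real.volume_Ico, len]
  congr 1
  rw [inv_pow]
  ring

lemma len_ne_zero (I : DI) : I.len ≠ 0 := by
  rw [len, ne_eq, ENNReal.ofReal_eq_zero, not_le]
  positivity

lemma len_ne_top (I : DI) : I.len ≠ ∞ := ENNReal.ofReal_ne_top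

lemma carrier_nonempty (I : DI) : I.carrier.Nonempty :=
  nonempty_of_measure_ne_zero (len_eq_volume I ▸ len_ne_zero I)

lemma n_le_of_carrier_subset {I J : DI} (h : I.carrier ⊆ J.carrier) : J.n ≤ I.n := by
  have hlen : I.len ≤ J.len := by
    rw [len_eq_volume, len_eq_volume]
    exact measure_mono h
  rw [len, len, ENNReal.ofReal_le_ofReal_iff (by positivity)] at hlen
  exact (pow_le_pow_iff_right_of_lt_one₀ (by norm_num) (by norm_num)).1 hlen

lemma carrier_injective : Function.Injective DI.carrier := by
  intro I J h
  have hn : I.n = J.n := le_antisymm (n_le_of_carrier_subset h.ge) (n_le_of_carrier_subset h.le)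
  obtain ⟨x, hx⟩ := I.carrier_nonempty
  have hxJ := h ▸ hx
  rw [mem_carrier_iff] at hx hxJ
  exact ext hn (by rw [← hx.2, ← hxJ.2, hn])

lemma finite_setOf_carrier_subset (I : DI) : {K : DI | I.carrier ⊆ K.carrier}.Finite := by
  refine ((Set.finite_Iic I.n).prod (Set.finite_Iio (2 ^ I.n))).preimage injective_n_k.injOn
    |>.subset ?_
  intro K hK
  have hn := n_le_of_carrier_subset hK
  exact ⟨hn, K.hk.trans_le (Nat.pow_le_pow_right two_pos hn)⟩

end DI

noncomputable def totalLen (S : Set DI) : ℝ≥0∞ := ∑' I : S, (I : DI).len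

lemma carlesonSum_eq_totalLen (L : Set DI) (J : DI) :
    carlesonSum L J = totalLen {I | I ∈ L ∧ I.carrier ⊆ J.carrier} := rfl

lemma totalLen_mono {S T : Set DI} (h : S ⊆ T) : totalLen S ≤ totalLen T :=
  ENNReal.tsum_mono_subtype _ h

lemma covMeas_le_totalLen (S : Set DI) : covMeas S ≤ totalLen S := by
  simp only [covMeas, totalLen, DI.len_eq_volume]
  exact measure_biUnion_le volume S.to_countable _

lemma totalLen_eq_covMeas {S : Set DI} (h : S.PairwiseDisjoint DI.carrier) :
    totalLen S = covMeas S := by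
  simp only [covMeas, totalLen, DI.len_eq_volume]
  exact (measure_biUnion S.to_countable h fun _ _ => measurableSet_Ico).symm

lemma covMeas_mono_of_forall_exists {S T : Set DI}
    (h : ∀ I ∈ S, ∃ K ∈ T, I.carrier ⊆ K.carrier) : covMeas S ≤ covMeas T := by
  refine measure_mono (Set.iUnion₂_subset fun I hI => ?_)
  obtain ⟨K, hK, hIK⟩ := h I hI
  exact hIK.trans (Set.subset_biUnion_of_mem hK)

lemma covMeas_le_len {S : Set DI} {J : DI} (h : ∀ I ∈ S, I.carrier ⊆ J.carrier) :
    covMeas S ≤ J.len := by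
  rw [DI.len_eq_volume]
  exact measure_mono (Set.iUnion₂_subset h)

lemma carlesonConst_le_iff {L : Set DI} {M : ℝ≥0∞} : carlesonConst L ≤ M ↔ CarlesonLE L M := by
  simp only [carlesonConst, iSup_le_iff, CarlesonLE,
    ENNReal.div_le_iff (DI.len_ne_zero _) (DI.len_ne_top _)]

lemma one_le_carlesonConst {L : Set DI} (hL : L.Nonempty) : 1 ≤ carlesonConst L := by
  obtain ⟨I, hI⟩ := hL
  refine le_iSup_of_le I ?_
  rw [ENNReal.le_div_iff_mul_le (.inl (DI.len_ne_zero I)) (.inl (DI.len_ne_top I)), one_mul]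
  exact ENNReal.le_tsum (⟨I, hI, subset_rfl⟩ : {K : DI // K ∈ L ∧ K.carrier ⊆ I.carrier})

lemma carlesonConst_empty : carlesonConst ∅ = 0 := by
  simp [carlesonConst, carlesonSum]

lemma exists_mem_maxSet_carrier_subset {S : Set DI} {I : DI} (hI : I ∈ S) :
    ∃ t ∈ maxSet S, I.carrier ⊆ t.carrier := by
  obtain ⟨t, ⟨htS, hIt⟩, hmax⟩ :=
    ((DI.finite_setOf_carrier_subset I).inter_of_right S).exists_maximalFor DI.carrier _
      ⟨I, hI, (subset_rfl : I.carrier ⊆ _)⟩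
  exact ⟨t, ⟨htS, fun K hK htK =>
    DI.carrier_injective (htK.antisymm (hmax ⟨hK, hIt.trans htK⟩ htK))⟩, hIt⟩

lemma pairwiseDisjoint_maxSet (S : Set DI) : (maxSet S).PairwiseDisjoint DI.carrier := by
  intro t ht t' ht' hne
  by_contra hnd
  rcases DI.carrier_subset_or_subset_of_not_disjoint hnd with h | h
  · exact hne (ht.2 t' ht'.1 h)
  · exact hne (ht'.2 t ht.1 h).symm

lemma carlesonLE_of_forall_mem {L : Set DI} {M : ℝ≥0∞}
    (h : ∀ t ∈ L, carlesonSum L t ≤ M * t.len) : CarlesonLE L M := by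
  intro J
  set S := {I | I ∈ L ∧ I.carrier ⊆ J.carrier}
  have hcover : S ⊆ ⋃ t ∈ maxSet S, {I | I ∈ L ∧ I.carrier ⊆ t.carrier} := by
    intro I hI
    obtain ⟨t, ht, hIt⟩ := exists_mem_maxSet_carrier_subset hI
    exact Set.mem_biUnion ht ⟨hI.1, hIt⟩
  calc carlesonSum L J
      ≤ ∑' t : maxSet S, carlesonSum L t :=
        (totalLen_mono hcover).trans (ENNReal.tsum_biUnion_le_tsum _ _ _)
    _ ≤ ∑' t : maxSet S, M * (t : DI).len :=
        ENNReal.tsum_le_tsum fun t => h t t.2.1.1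
    _ = M * covMeas (maxSet S) := by
        rw [ENNReal.tsum_mul_left, ← totalLen_eq_covMeas (pairwiseDisjoint_maxSet S), totalLen]
    _ ≤ M * J.len := by
        gcongr
        exact covMeas_le_len fun t ht => ht.1.2

noncomputable def gen (B : Set DI) (I : DI) : ℕ := {K | K ∈ B ∧ I.carrier ⊂ K.carrier}.ncard

lemma finite_setOf_mem_and_carrier_ssubset (B : Set DI) (I : DI) :
    {K | K ∈ B ∧ I.carrier ⊂ K.carrier}.Finite :=
  (DI.finite_setOf_carrier_subset I).subset fun _ hK => hK.2.subset

lemma gen_eq_gen_add_one {B : Set DI} {I P : DI} (hP : P ∈ B) (hIP : I.carrier ⊂ P.carrier)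
    (hmin : ∀ K ∈ B, I.carrier ⊂ K.carrier → P.carrier ⊆ K.carrier) : gen B I = gen B P + 1 := by
  have hnot : P ∉ {K | K ∈ B ∧ P.carrier ⊂ K.carrier} := fun h => h.2.ne rfl
  have hset : {K | K ∈ B ∧ I.carrier ⊂ K.carrier} =
      insert P {K | K ∈ B ∧ P.carrier ⊂ K.carrier} := by
    ext K
    refine ⟨fun hK => ?_, ?_⟩
    · rcases eq_or_ne K P with rfl | hne
      · exact Set.mem_insert _ _
      · exact Set.mem_insert_of_mem _
          ⟨hK.1, (hmin K hK.1 hK.2).ssubset_of_ne fun h => hne (DI.carrier_injective h).symm⟩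
    · rintro (rfl | hK)
      · exact ⟨hP, hIP⟩
      · exact ⟨hK.1, hIP.trans hK.2⟩
  rw [gen, gen, hset, Set.ncard_insert_of_notMem hnot (finite_setOf_mem_and_carrier_ssubset B P)]

lemma gen_lt_gen {B : Set DI} {I K : DI} (hK : K ∈ B) (h : I.carrier ⊂ K.carrier) :
    gen B K < gen B I := by
  refine Set.ncard_lt_ncard ?_ (finite_setOf_mem_and_carrier_ssubset B I)
  refine ⟨fun L hL => ⟨hL.1, h.trans hL.2⟩, fun hsub => (hsub ⟨hK, h⟩).2.ne rfl⟩

lemma pairwiseDisjoint_setOf_gen_eq (B : Set DI) (m : ℕ) :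
    {K | K ∈ B ∧ gen B K = m}.PairwiseDisjoint DI.carrier := by
  intro K hK L hL hne
  by_contra hnd
  rcases DI.carrier_subset_or_subset_of_not_disjoint hnd with h | h
  · exact (gen_lt_gen hL.1 (h.ssubset_of_ne (DI.carrier_injective.ne hne))).ne
      (hL.2.trans hK.2.symm)
  · exact (gen_lt_gen hK.1 (h.ssubset_of_ne (DI.carrier_injective.ne hne.symm))).ne
      (hK.2.trans hL.2.symm)

/-- The smallest interval of `B` strictly containing `I` has generation one less. -/
lemma exists_parent {B : Set DI} {I t : DI} (ht : t ∈ B) (hIt : I.carrier ⊂ t.carrier) :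
    ∃ P ∈ B, I.carrier ⊂ P.carrier ∧ P.carrier ⊆ t.carrier ∧ gen B I = gen B P + 1 := by
  obtain ⟨P, ⟨hPB, hIP⟩, hmin⟩ :=
    (finite_setOf_mem_and_carrier_ssubset B I).exists_minimalFor DI.carrier _ ⟨t, ht, hIt⟩
  have hPmin : ∀ K ∈ B, I.carrier ⊂ K.carrier → P.carrier ⊆ K.carrier := by
    intro K hKB hIK
    obtain ⟨x, hx⟩ := I.carrier_nonempty
    have hnd : ¬ Disjoint K.carrier P.carrier :=
      Set.not_disjoint_iff.2 ⟨x, hIK.subset hx, hIP.subset hx⟩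
    exact (DI.carrier_subset_or_subset_of_not_disjoint hnd).elim (hmin ⟨hKB, hIK⟩) id
  exact ⟨P, hPB, hIP, hPmin t ht hIt, gen_eq_gen_add_one hPB hIP hPmin⟩

/-- Blocks of `A` consecutive terms of an antitone sequence dominate `A` times their last term. -/
lemma natCast_mul_tsum_le_of_antitone {s : ℕ → ℝ≥0∞} (hs : Antitone s) (A : ℕ) :
    (A : ℝ≥0∞) * ∑' r, s ((r + 1) * A) ≤ ∑' m, s (m + 1) := by
  rcases Nat.eq_zero_or_pos A with rfl | hA
  · simp
  have : NeZero A := ⟨hA.ne'⟩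
  calc (A : ℝ≥0∞) * ∑' r, s ((r + 1) * A)
      = ∑' r, ∑' _ : Fin A, s ((r + 1) * A) := by
        simp only [tsum_fintype, Finset.sum_const, Finset.card_univ, Fintype.card_fin,
          nsmul_eq_mul, ENNReal.tsum_mul_left]
    _ ≤ ∑' r, ∑' i : Fin A, s (r * A + i + 1) :=
        ENNReal.tsum_le_tsum fun r => ENNReal.tsum_le_tsum fun i => hs (by
          have := i.is_lt
          rw [add_mul, one_mul]
          omega)
    _ = ∑' m, s (m + 1) := by
        rw [← ENNReal.tsum_prod]
        exact (Nat.divModEquiv A).symm.tsum_eq fun m => s (m + 1)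

def layer (B : Set DI) (t : DI) (m : ℕ) : Set DI :=
  {K | K ∈ B ∧ gen B K = gen B t + m ∧ K.carrier ⊆ t.carrier}

lemma antitone_totalLen_layer {B : Set DI} {t : DI} (ht : t ∈ B) :
    Antitone fun m => totalLen (layer B t m) := by
  refine antitone_nat_of_succ_le fun m => ?_
  have hdisj : (layer B t (m + 1)).PairwiseDisjoint DI.carrier :=
    (pairwiseDisjoint_setOf_gen_eq B _).subset fun K hK => ⟨hK.1, hK.2.1⟩
  have hparent : ∀ K ∈ layer B t (m + 1), ∃ P ∈ layer B t m, K.carrier ⊆ P.carrier := by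
    rintro K ⟨hKB, hKgen, hKt⟩
    have hne : K ≠ t := by rintro rfl; omega
    obtain ⟨P, hPB, hKP, hPt, hgen⟩ :=
      exists_parent ht (hKt.ssubset_of_ne (DI.carrier_injective.ne hne))
    exact ⟨P, ⟨hPB, by omega, hPt⟩, hKP.subset⟩
  calc totalLen (layer B t (m + 1)) = covMeas (layer B t (m + 1)) := totalLen_eq_covMeas hdisj
    _ ≤ covMeas (layer B t m) := covMeas_mono_of_forall_exists hparent
    _ ≤ totalLen (layer B t m) := covMeas_le_totalLen _

lemma tsum_totalLen_layer_succ_le (B : Set DI) (t : DI) :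
    ∑' m, totalLen (layer B t (m + 1)) ≤ carlesonSum B t := by
  have hdisj : Set.univ.PairwiseDisjoint fun m => layer B t (m + 1) := by
    intro m _ m' _ hne
    refine Set.disjoint_left.2 fun K hK hK' => hne ?_
    have := hK.2.1.symm.trans hK'.2.1
    omega
  rw [carlesonSum_eq_totalLen]
  simp only [totalLen]
  rw [← ENNReal.tsum_biUnion hdisj]
  exact ENNReal.tsum_mono_subtype _ (Set.iUnion_subset fun m K hK => ⟨hK.1, hK.2.2⟩)

def genClass (B : Set DI) (A j : ℕ) : Set DI := {I | I ∈ B ∧ gen B I % A = j}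

lemma genClass_subset_layers {B : Set DI} {A : ℕ} {t : DI} (ht : t ∈ B) :
    {I | I ∈ genClass B A (gen B t % A) ∧ I.carrier ⊆ t.carrier}
      ⊆ {t} ∪ ⋃ r : ℕ, layer B t ((r + 1) * A) := by
  rintro I ⟨⟨hIB, hmod⟩, hIt⟩
  rcases eq_or_ne I t with rfl | hne
  · exact Or.inl rfl
  have hlt := gen_lt_gen ht (hIt.ssubset_of_ne (DI.carrier_injective.ne hne))
  obtain ⟨q, hq⟩ := (Nat.modEq_iff_dvd' hlt.le).1 hmod.symm
  have hq0 : q ≠ 0 := by rintro rfl; omega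
  refine Or.inr (Set.mem_iUnion.2 ⟨q - 1, hIB, ?_, hIt⟩)
  rw [Nat.sub_add_cancel (Nat.pos_of_ne_zero hq0), mul_comm, ← hq]
  omega

lemma carlesonSum_genClass_le {B : Set DI} {A : ℕ} {c : ℝ≥0∞} (hA : A ≠ 0)
    (hB : CarlesonLE B (A * c)) {t : DI} (ht : t ∈ B) :
    carlesonSum (genClass B A (gen B t % A)) t ≤ (1 + c) * t.len := by
  have htail : ∑' r, totalLen (layer B t ((r + 1) * A)) ≤ c * t.len := by
    rw [← ENNReal.mul_le_mul_iff_right (Nat.cast_ne_zero.2 hA) (ENNReal.natCast_ne_top A),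
      ← mul_assoc]
    exact (natCast_mul_tsum_le_of_antitone (antitone_totalLen_layer ht) A).trans
      ((tsum_totalLen_layer_succ_le B t).trans (hB t))
  calc carlesonSum (genClass B A (gen B t % A)) t
      ≤ totalLen {t} + totalLen (⋃ r : ℕ, layer B t ((r + 1) * A)) :=
        (totalLen_mono (genClass_subset_layers ht)).trans (ENNReal.tsum_union_le _ _ _)
    _ ≤ t.len + c * t.len := by
        rw [totalLen, tsum_singleton t DI.len]
        exact add_le_add_right ((ENNReal.tsum_iUnion_le_tsum _ _).trans htail) _
    _ = (1 + c) * t.len := by ring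

lemma iUnion_genClass (B : Set DI) {A : ℕ} (hA : A ≠ 0) : ⋃ i : Fin A, genClass B A i = B := by
  ext I
  refine ⟨fun hI => (Set.mem_iUnion.1 hI).elim fun _ h => h.1, fun hI => ?_⟩
  exact Set.mem_iUnion.2 ⟨⟨gen B I % A, Nat.mod_lt _ (Nat.pos_of_ne_zero hA)⟩, hI, rfl⟩

lemma pairwise_disjoint_genClass (B : Set DI) (A : ℕ) :
    Pairwise fun i j : Fin A => Disjoint (genClass B A i) (genClass B A j) :=
  fun _ _ hij => Set.disjoint_left.2 fun _ hi hj => hij (Fin.ext (hi.2.symm.trans hj.2))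

lemma carlesonLE_genClass {B : Set DI} {A : ℕ} {c : ℝ≥0∞} (hA : A ≠ 0)
    (hB : CarlesonLE B (A * c)) (j : ℕ) : CarlesonLE (genClass B A j) (1 + c) :=
  carlesonLE_of_forall_mem fun _ ⟨htB, htj⟩ => htj ▸ carlesonSum_genClass_le hA hB htB

theorem stmt12_general (B : Set DI)
    (A : ℕ) (hA1 : (A : ENNReal) < 4 * carlesonConst B)
    (hA2 : ∀ m : ℕ, (m : ENNReal) < 4 * carlesonConst B → m ≤ A) :
    ∃ P : Fin A → Set DI,
      (⋃ i, P i) = B ∧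
      (Pairwise fun i j => Disjoint (P i) (P j)) ∧
      ∀ i, carlesonConst (P i) ≤ 4 := by
  have hne : B.Nonempty := Set.nonempty_iff_ne_empty.2 <| by
    rintro rfl
    simp [carlesonConst_empty] at hA1
  have h4C : 4 ≤ 4 * carlesonConst B := le_mul_of_one_le_right' (one_le_carlesonConst hne)
  have hA : A ≠ 0 := by
    have := hA2 1 ((by norm_num : ((1 : ℕ) : ℝ≥0∞) < 4).trans_le h4C)
    omega
  have hCA : carlesonConst B ≤ A := by
    have h4CA : 4 * carlesonConst B ≤ A + 1 :=
      not_lt.1 fun h => by have := hA2 (A + 1) (mod_cast h); omega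
    rw [← ENNReal.mul_le_mul_iff_right four_ne_zero ENNReal.ofNat_ne_top]
    exact h4CA.trans (mod_cast (by omega : A + 1 ≤ 4 * A))
  have hBA : CarlesonLE B (A * 1) := by
    rw [mul_one]
    exact carlesonConst_le_iff.1 hCA
  refine ⟨fun i => genClass B A i, iUnion_genClass B hA, pairwise_disjoint_genClass B A,
    fun i => ?_⟩
  exact (carlesonConst_le_iff.2 (carlesonLE_genClass hA hBA i)).trans (by norm_num)

/-- Jones splitting: a collection `B` with finite Carleson constant splits into `A`
pairwise disjoint subcollections of Carleson constant at most `4`, where `A` is the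
largest integer less than `4⟦B⟧`. -/
theorem stmt12 (B : Set DI) (hB : carlesonConst B ≠ ⊤)
    (A : ℕ) (hA1 : (A : ENNReal) < 4 * carlesonConst B)
    (hA2 : ∀ m : ℕ, (m : ENNReal) < 4 * carlesonConst B → m ≤ A) :
    ∃ P : Fin A → Set DI,
      (⋃ i, P i) = B ∧
      (Pairwise fun i j => Disjoint (P i) (P j)) ∧
      ∀ i, carlesonConst (P i) ≤ 4 :=
  stmt12_general B A hA1 hA2
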